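/- arXiv:2309.04796 — 6 statements merged into one kernel-verified Lean document; each statement's English description precedes it below -/
import Mathlib

section
/- Let w1, w2 be distinct points of the open unit disc D and let t be a complex number with |t·w1| < 1 and |t·w2| < 1. Then the pseudohyperbolic distance satisfies m(w1, w2) ≤ m(t·w1, t·w2) if and only if |t| ≥ 1, where m(a,b) = |(a − b)/(1 − conj(a)·b)|. -/
open Complex Metric Set

/-- Pseudohyperbolic distance on the unit disc. -/
noncomputable def pdist (a b : ℂ) : ℝ := ‖(a - b) / (1 - (starRingEnd ℂ) a * b)‖

/-!
Writing `c = conj w₁ * w₂` and `r = ‖t‖`, we have `conj (t w₁) (t w₂) = r² c`, so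
`m(t w₁, t w₂) = r ‖w₁ - w₂‖ / ‖1 - r² c‖` and the inequality reduces to `‖1 - r² c‖ ≤ r ‖1 - c‖`.
Squaring, `r² ‖1 - c‖² - ‖1 - r² c‖² = (r² - 1)(1 - r² ‖c‖²)`, and the second factor is positive
because `‖c‖ < 1` and `r² ‖c‖ = ‖t w₁‖ ‖t w₂‖ < 1`.
-/

theorem norm_one_sub_ofReal_mul_sq (s : ℝ) (c : ℂ) :
    ‖1 - (s : ℂ) * c‖ ^ 2 = s * ‖1 - c‖ ^ 2 - (s - 1) * (1 - s * ‖c‖ ^ 2) := by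
  simp only [Complex.sq_norm, Complex.normSq_apply, Complex.sub_re, Complex.sub_im,
    Complex.mul_re, Complex.mul_im, Complex.ofReal_re, Complex.ofReal_im, Complex.one_re,
    Complex.one_im]
  ring

theorem norm_one_sub_sq_mul_le_mul_norm_one_sub_iff {r : ℝ} {c : ℂ} (hr : 0 ≤ r)
    (hrc : r ^ 2 * ‖c‖ ^ 2 < 1) :
    ‖1 - (r : ℂ) ^ 2 * c‖ ≤ r * ‖1 - c‖ ↔ 1 ≤ r := by
  have hsq := norm_one_sub_ofReal_mul_sq (r ^ 2) c
  push_cast at hsq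
  rw [← pow_le_pow_iff_left₀ (norm_nonneg _) (by positivity) two_ne_zero, hsq, mul_pow,
    sub_le_self_iff, mul_nonneg_iff_of_pos_right (by linarith), sub_nonneg,
    one_le_sq_iff₀ hr]

theorem norm_one_sub_pos_of_norm_lt_one {R : Type*} [SeminormedRing R] [NormOneClass R] {z : R}
    (hz : ‖z‖ < 1) : 0 < ‖1 - z‖ := by
  linarith [norm_sub_norm_le 1 z, norm_one (α := R)]

theorem pdist_mul_mul (t a b : ℂ) :
    pdist (t * a) (t * b) = ‖t‖ * ‖a - b‖ / ‖1 - (‖t‖ : ℂ) ^ 2 * (starRingEnd ℂ a * b)‖ := by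
  rw [pdist, norm_div, ← mul_sub, norm_mul, map_mul,
    show starRingEnd ℂ t * starRingEnd ℂ a * (t * b) = (starRingEnd ℂ t * t) * (starRingEnd ℂ a * b)
      by ring, Complex.conj_mul']

theorem stmt0 (w1 w2 : ℂ) (h1 : w1 ∈ ball (0:ℂ) 1) (h2 : w2 ∈ ball (0:ℂ) 1)
    (hne : w1 ≠ w2) (t : ℂ)
    (ht1 : t * w1 ∈ ball (0:ℂ) 1) (ht2 : t * w2 ∈ ball (0:ℂ) 1) :
    pdist w1 w2 ≤ pdist (t * w1) (t * w2) ↔ 1 ≤ ‖t‖ := by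
  rw [mem_ball_zero_iff] at h1 h2 ht1 ht2
  set c := starRingEnd ℂ w1 * w2 with hc_def
  have hc : ‖c‖ < 1 := by
    rw [hc_def, norm_mul, Complex.norm_conj]
    nlinarith [norm_nonneg w1, norm_nonneg w2]
  have htc : ‖t‖ ^ 2 * ‖c‖ < 1 := by
    have : ‖t * w1‖ * ‖t * w2‖ = ‖t‖ ^ 2 * ‖c‖ := by
      rw [hc_def, norm_mul, norm_mul, norm_mul, Complex.norm_conj]; ring
    nlinarith [norm_nonneg (t * w1), norm_nonneg (t * w2)]
  have hD : 0 < ‖1 - (‖t‖ : ℂ) ^ 2 * c‖ := by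
    refine norm_one_sub_pos_of_norm_lt_one ?_
    rwa [norm_mul, norm_pow, Complex.norm_real, norm_norm]
  have hd : 0 < ‖w1 - w2‖ := norm_pos_iff.mpr (sub_ne_zero.mpr hne)
  rw [pdist_mul_mul, pdist, norm_div, div_le_div_iff₀ (norm_one_sub_pos_of_norm_lt_one hc) hD,
    show ‖t‖ * ‖w1 - w2‖ * ‖1 - c‖ = ‖w1 - w2‖ * (‖t‖ * ‖1 - c‖) by ring,
    mul_le_mul_iff_right₀ hd]
  exact norm_one_sub_sq_mul_le_mul_norm_one_sub_iff (norm_nonneg t)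
    (by nlinarith [norm_nonneg c])
end

section
/- The set 𝒟_n = {(f(z1),…,f(zn)) : f holomorphic on Ω with sup|f| < 1} is an open, balanced, convex subset of the unit polydisc D^n. -/
open Complex Metric Set

/-- The (open) Pick body of a domain `Ω ⊆ ℂ^m` at nodes `z 0, …, z (n-1)`:
tuples of values at the nodes of holomorphic functions of sup-norm strictly less than 1. -/
def PickBody (m n : ℕ) (Ω : Set (Fin m → ℂ)) (z : Fin n → (Fin m → ℂ)) :
    Set (Fin n → ℂ) :=
  {w | ∃ f : (Fin m → ℂ) → ℂ, DifferentiableOn ℂ f Ω ∧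
        (∃ c : ℝ, c < 1 ∧ ∀ x ∈ Ω, ‖f x‖ ≤ c) ∧ ∀ j, f (z j) = w j}

/-!
Scaling by `|a| ≤ 1` and taking convex combinations of interpolating functions keep the
sup-norm below a constant `< 1`, which gives balancedness and convexity. For openness,
products of normalized separating functions give bounded holomorphic `δ_j` with
`δ_j (z k) = [j = k]`, so every `v ∈ ℂⁿ` is interpolated by `∑ v_j δ_j` of sup-norm at most
`C ‖v‖`. Adding this correction for `v = w' - w` to a function `f` with `sup |f| ≤ c < 1`
interpolating `w` reaches every `w'` in a ball around `w`.
-/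

section BoundedHolomorphic

variable {E : Type*} [NormedAddCommGroup E] [NormedSpace ℂ E]

def boundedHolomorphic (Ω : Set E) : Subalgebra ℂ (E → ℂ) where
  carrier := {f | DifferentiableOn ℂ f Ω ∧ ∃ c : ℝ, ∀ x ∈ Ω, ‖f x‖ ≤ c}
  mul_mem' := by
    rintro f g ⟨hf, c, hc⟩ ⟨hg, d, hd⟩
    refine ⟨hf.mul hg, |c| * |d|, fun x hx => ?_⟩
    rw [Pi.mul_apply, norm_mul]
    exact mul_le_mul ((hc x hx).trans (le_abs_self c)) ((hd x hx).trans (le_abs_self d))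
      (norm_nonneg _) (abs_nonneg c)
  add_mem' := by
    rintro f g ⟨hf, c, hc⟩ ⟨hg, d, hd⟩
    exact ⟨hf.add hg, c + d, fun x hx =>
      (norm_add_le _ _).trans (add_le_add (hc x hx) (hd x hx))⟩
  algebraMap_mem' a := ⟨differentiableOn_const a, ‖a‖, fun _ _ => le_rfl⟩

variable {Ω : Set E}

lemma exists_mem_boundedHolomorphic_eq_one_eq_zero {f : E → ℂ}
    (hf : f ∈ boundedHolomorphic Ω) {a b : E} (hab : f a ≠ f b) :
    ∃ h ∈ boundedHolomorphic Ω, h a = 1 ∧ h b = 0 := by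
  refine ⟨(f a - f b)⁻¹ • (f - algebraMap ℂ (E → ℂ) (f b)), ?_, ?_, ?_⟩
  · exact Subalgebra.smul_mem _ (Subalgebra.sub_mem _ hf (Subalgebra.algebraMap_mem _ _)) _
  · simp [inv_mul_cancel₀ (sub_ne_zero.mpr hab)]
  · simp

lemma exists_mem_boundedHolomorphic_delta {ι : Type*} [Fintype ι]
    (hCara : ∀ x ∈ Ω, ∀ y ∈ Ω, x ≠ y → ∃ f ∈ boundedHolomorphic Ω, f x ≠ f y)
    {z : ι → E} (hz : ∀ j, z j ∈ Ω) (hinj : Function.Injective z) (j : ι) :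
    ∃ g ∈ boundedHolomorphic Ω, g (z j) = 1 ∧ ∀ k ≠ j, g (z k) = 0 := by
  have separator : ∀ k, ∃ h ∈ boundedHolomorphic Ω, h (z j) = 1 ∧ (k ≠ j → h (z k) = 0) := by
    intro k
    by_cases hk : k = j
    · exact ⟨1, Subalgebra.one_mem _, rfl, fun hne => absurd hk hne⟩
    · obtain ⟨f, hf, hne⟩ := hCara _ (hz j) _ (hz k) (hinj.ne (Ne.symm hk))
      obtain ⟨h, hh, h1, h0⟩ := exists_mem_boundedHolomorphic_eq_one_eq_zero hf hne
      exact ⟨h, hh, h1, fun _ => h0⟩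
  choose h hh h1 h0 using separator
  refine ⟨∏ k, h k, Subalgebra.prod_mem _ fun k _ => hh k, ?_, fun k hk => ?_⟩
  · simpa only [Finset.prod_apply] using Finset.prod_eq_one fun k _ => h1 k
  · simpa only [Finset.prod_apply] using Finset.prod_eq_zero (Finset.mem_univ k) (h0 k hk)

lemma exists_interpolant_norm_le {ι : Type*} [Fintype ι]
    (hCara : ∀ x ∈ Ω, ∀ y ∈ Ω, x ≠ y → ∃ f ∈ boundedHolomorphic Ω, f x ≠ f y)
    {z : ι → E} (hz : ∀ j, z j ∈ Ω) (hinj : Function.Injective z) :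
    ∃ C : ℝ, 0 ≤ C ∧ ∀ v : ι → ℂ, ∃ g : E → ℂ, DifferentiableOn ℂ g Ω ∧
      (∀ x ∈ Ω, ‖g x‖ ≤ C * ‖v‖) ∧ ∀ k, g (z k) = v k := by
  choose δ hδ hδ1 hδ0 using exists_mem_boundedHolomorphic_delta hCara hz hinj
  choose M hM using fun j => (hδ j).2
  refine ⟨∑ j, |M j|, Finset.sum_nonneg fun j _ => abs_nonneg _, fun v =>
    ⟨∑ j, v j • δ j, (Subalgebra.sum_mem _ fun j _ => Subalgebra.smul_mem _ (hδ j) _).1,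
      fun x hx => ?_, fun k => ?_⟩⟩
  · calc ‖(∑ j, v j • δ j : E → ℂ) x‖ ≤ ∑ j, ‖v j‖ * ‖δ j x‖ := by
          simpa only [Finset.sum_apply, Pi.smul_apply, smul_eq_mul, norm_mul]
            using norm_sum_le Finset.univ fun j => v j * δ j x
      _ ≤ ∑ j, ‖v‖ * |M j| := Finset.sum_le_sum fun j _ =>
          mul_le_mul (norm_le_pi_norm v j) ((hM j x hx).trans (le_abs_self _))
            (norm_nonneg _) (norm_nonneg _)
      _ = (∑ j, |M j|) * ‖v‖ := by rw [← Finset.mul_sum, mul_comm]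
  · rw [Finset.sum_apply, Finset.sum_eq_single k (fun j _ hj => by simp [hδ0 j k hj.symm])
      (by simp)]
    simp [hδ1 k]

end BoundedHolomorphic

section PickBody

variable {m n : ℕ} {Ω : Set (Fin m → ℂ)} {z : Fin n → (Fin m → ℂ)}

lemma pickBody_subset_polydisc (hz : ∀ j, z j ∈ Ω) :
    PickBody m n Ω z ⊆ {w : Fin n → ℂ | ∀ j, ‖w j‖ < 1} := by
  rintro w ⟨f, -, ⟨c, hc1, hc⟩, hval⟩ j
  exact (hval j ▸ hc _ (hz j)).trans_lt hc1

lemma balanced_pickBody : Balanced ℂ (PickBody m n Ω z) := by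
  refine balanced_iff_smul_mem.2 fun a ha w ⟨f, hf, ⟨c, hc1, hc⟩, hval⟩ => ?_
  refine ⟨a • f, hf.const_smul a, ⟨c, hc1, fun x hx => ?_⟩, fun j => by simp [hval j]⟩
  calc ‖a * f x‖ = ‖a‖ * ‖f x‖ := norm_mul _ _
    _ ≤ 1 * c := mul_le_mul ha (hc x hx) (norm_nonneg _) zero_le_one
    _ = c := one_mul c

lemma convex_pickBody : Convex ℝ (PickBody m n Ω z) := by
  rintro w₁ ⟨f₁, hf₁, ⟨c₁, hc₁1, hc₁⟩, hval₁⟩ w₂ ⟨f₂, hf₂, ⟨c₂, hc₂1, hc₂⟩, hval₂⟩ s t hs ht hst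
  refine ⟨s • f₁ + t • f₂, (hf₁.const_smul s).add (hf₂.const_smul t),
    ⟨max c₁ c₂, max_lt hc₁1 hc₂1, fun x hx => ?_⟩, fun j => by simp [hval₁ j, hval₂ j]⟩
  calc ‖(s • f₁ + t • f₂) x‖ ≤ s * ‖f₁ x‖ + t * ‖f₂ x‖ := by
        simpa only [Pi.add_apply, Pi.smul_apply, norm_smul, Real.norm_of_nonneg hs,
          Real.norm_of_nonneg ht] using norm_add_le (s • f₁ x) (t • f₂ x)
    _ ≤ s * max c₁ c₂ + t * max c₁ c₂ := by
        gcongr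
        · exact (hc₁ x hx).trans (le_max_left _ _)
        · exact (hc₂ x hx).trans (le_max_right _ _)
    _ = max c₁ c₂ := by rw [← add_mul, hst, one_mul]

lemma isOpen_pickBody
    (hCara : ∀ x ∈ Ω, ∀ y ∈ Ω, x ≠ y → ∃ f ∈ boundedHolomorphic Ω, f x ≠ f y)
    (hz : ∀ j, z j ∈ Ω) (hinj : Function.Injective z) : IsOpen (PickBody m n Ω z) := by
  obtain ⟨C, hC, interp⟩ := exists_interpolant_norm_le hCara hz hinj
  refine Metric.isOpen_iff.2 fun w ⟨f, hf, ⟨c, hc1, hc⟩, hval⟩ => ?_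
  have hε : 0 < (1 - c) / (C + 1) := div_pos (by linarith) (by linarith)
  refine ⟨_, hε, fun w' hw' => ?_⟩
  obtain ⟨g, hg, hgC, hgval⟩ := interp (w' - w)
  have hsmall : C * ‖w' - w‖ < 1 - c := by
    rw [mem_ball, dist_eq_norm, lt_div_iff₀ (by linarith)] at hw'
    nlinarith [norm_nonneg (w' - w)]
  refine ⟨f + g, hf.add hg, ⟨c + C * ‖w' - w‖, by linarith, fun x hx => ?_⟩, fun j => ?_⟩
  · exact (norm_add_le _ _).trans (add_le_add (hc x hx) (hgC x hx))
  · simp [hval j, hgval j]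

end PickBody

theorem stmt1_general (m n : ℕ) (Ω : Set (Fin m → ℂ))
    (hCara : ∀ x ∈ Ω, ∀ y ∈ Ω, x ≠ y → ∃ f : (Fin m → ℂ) → ℂ,
      DifferentiableOn ℂ f Ω ∧ (∃ c : ℝ, ∀ x' ∈ Ω, ‖f x'‖ ≤ c) ∧ f x ≠ f y)
    (z : Fin n → (Fin m → ℂ)) (hz : ∀ j, z j ∈ Ω) (hinj : Function.Injective z) :
    IsOpen (PickBody m n Ω z) ∧ Balanced ℂ (PickBody m n Ω z) ∧
      Convex ℝ (PickBody m n Ω z) ∧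
      PickBody m n Ω z ⊆ {w : Fin n → ℂ | ∀ j, ‖w j‖ < 1} := by
  have hCara' : ∀ x ∈ Ω, ∀ y ∈ Ω, x ≠ y → ∃ f ∈ boundedHolomorphic Ω, f x ≠ f y :=
    fun x hx y hy hxy =>
      let ⟨f, hf, hfb, hne⟩ := hCara x hx y hy hxy
      ⟨f, ⟨hf, hfb⟩, hne⟩
  exact ⟨isOpen_pickBody hCara' hz hinj, balanced_pickBody, convex_pickBody,
    pickBody_subset_polydisc hz⟩

theorem stmt1 (m n : ℕ) (Ω : Set (Fin m → ℂ)) (hopen : IsOpen Ω) (hconn : IsConnected Ω)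
    (hCara : ∀ x ∈ Ω, ∀ y ∈ Ω, x ≠ y → ∃ f : (Fin m → ℂ) → ℂ,
      DifferentiableOn ℂ f Ω ∧ (∃ c : ℝ, ∀ x' ∈ Ω, ‖f x'‖ ≤ c) ∧ f x ≠ f y)
    (z : Fin n → (Fin m → ℂ)) (hz : ∀ j, z j ∈ Ω) (hinj : Function.Injective z) :
    IsOpen (PickBody m n Ω z) ∧ Balanced ℂ (PickBody m n Ω z) ∧
      Convex ℝ (PickBody m n Ω z) ∧
      PickBody m n Ω z ⊆ {w : Fin n → ℂ | ∀ j, ‖w j‖ < 1} :=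
  stmt1_general m n Ω hCara z hz hinj
end

section
/- For two distinct points z1, z2 in a Carathéodory hyperbolic domain Ω, the Pick body 𝒟_Ω(z1, z2) equals {(w1, w2) ∈ D × D : m(w1, w2) < c*_Ω(z1, z2)}, where c*_Ω(z1,z2) = sup{ m(g(z1), g(z2)) : g holomorphic Ω → D } is the Möbius Carathéodory pseudodistance. -/
open Complex Metric Set

/-- Pick body at two points, as a subset of `ℂ × ℂ`. -/
def PickBody2 (m : ℕ) (Ω : Set (Fin m → ℂ)) (z1 z2 : Fin m → ℂ) : Set (ℂ × ℂ) :=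
  {p | ∃ f : (Fin m → ℂ) → ℂ, DifferentiableOn ℂ f Ω ∧
        (∃ c : ℝ, c < 1 ∧ ∀ x ∈ Ω, ‖f x‖ ≤ c) ∧ f z1 = p.1 ∧ f z2 = p.2}

/-- The Möbius Carathéodory pseudodistance. -/
noncomputable def cStar (m : ℕ) (Ω : Set (Fin m → ℂ)) (x y : Fin m → ℂ) : ℝ :=
  sSup {r : ℝ | ∃ g : (Fin m → ℂ) → ℂ, DifferentiableOn ℂ g Ω ∧
    MapsTo g Ω (ball (0:ℂ) 1) ∧ r = pdist (g x) (g y)}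


/-!
The disc automorphisms `φ_a z = (z - a) / (1 - conj a * z)` satisfy `m(a, z) = |φ_a z|` and
preserve the Pick body. If `m(w₁, w₂) < m(g z₁, g z₂)` for some holomorphic `g : Ω → D`, then
`φ_{-w₁} (λ · φ_{g z₁} ∘ g)` with `λ = φ_{w₁} w₂ / φ_{g z₁} (g z₂)` takes the values `w₁, w₂`, and
its sup is `< 1` because `|λ| < 1`. Conversely, if `sup |f| ≤ c < 1` then `f / e` maps into `D`
for `c < e < 1`, and dividing by `e` strictly increases `m(w₁, w₂)` when `w₁ ≠ w₂`; when
`w₁ = w₂` one only needs `c* > 0`, which Carathéodory hyperbolicity gives.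
-/

open ComplexConjugate

noncomputable def mobius (a z : ℂ) : ℂ := (z - a) / (1 - conj a * z)

section Disc

variable {a b z : ℂ}

lemma normSq_one_sub_conj_mul_sub_normSq_sub (a b : ℂ) :
    normSq (1 - conj a * b) - normSq (a - b) = (1 - normSq a) * (1 - normSq b) := by
  simp only [normSq_apply, sub_re, sub_im, mul_re, mul_im, one_re, one_im, conj_re, conj_im]
  ring

lemma norm_sub_lt_norm_one_sub_conj_mul (ha : ‖a‖ < 1) (hb : ‖b‖ < 1) :
    ‖a - b‖ < ‖1 - conj a * b‖ := by
  have ha' : normSq a < 1 := by rw [← Complex.sq_norm]; nlinarith [norm_nonneg a]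
  have hb' : normSq b < 1 := by rw [← Complex.sq_norm]; nlinarith [norm_nonneg b]
  have := normSq_one_sub_conj_mul_sub_normSq_sub a b
  refine lt_of_pow_lt_pow_left₀ 2 (norm_nonneg _) ?_
  rw [Complex.sq_norm, Complex.sq_norm]
  nlinarith

lemma one_sub_conj_mul_ne_zero (ha : ‖a‖ < 1) (hb : ‖b‖ < 1) : 1 - conj a * b ≠ 0 :=
  norm_pos_iff.mp ((norm_nonneg _).trans_lt (norm_sub_lt_norm_one_sub_conj_mul ha hb))

lemma norm_mobius (a z : ℂ) : ‖mobius a z‖ = pdist a z := by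
  rw [mobius, pdist, norm_div, norm_div, norm_sub_rev]

lemma pdist_lt_one (ha : ‖a‖ < 1) (hb : ‖b‖ < 1) : pdist a b < 1 := by
  rw [pdist, norm_div, div_lt_one (norm_pos_iff.mpr (one_sub_conj_mul_ne_zero ha hb))]
  exact norm_sub_lt_norm_one_sub_conj_mul ha hb

lemma pdist_pos (ha : ‖a‖ < 1) (hb : ‖b‖ < 1) (hab : a ≠ b) : 0 < pdist a b :=
  norm_pos_iff.mpr (div_ne_zero (sub_ne_zero.mpr hab) (one_sub_conj_mul_ne_zero ha hb))

lemma mapsTo_mobius (ha : ‖a‖ < 1) : MapsTo (mobius a) (ball 0 1) (ball 0 1) := fun z hz => by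
  rw [mem_ball_zero_iff] at hz ⊢
  rw [norm_mobius]
  exact pdist_lt_one ha hz

lemma differentiableOn_mobius (ha : ‖a‖ < 1) : DifferentiableOn ℂ (mobius a) (ball 0 1) :=
  (differentiableOn_id.sub_const a).div ((differentiableOn_const 1).sub
    (differentiableOn_id.const_mul _)) fun _ hz =>
      one_sub_conj_mul_ne_zero ha (mem_ball_zero_iff.mp hz)

@[simp] lemma mobius_self (a : ℂ) : mobius a a = 0 := by simp [mobius]

lemma mobius_neg_zero (a : ℂ) : mobius (-a) 0 = a := by simp [mobius]

lemma mobius_neg_mobius (ha : ‖a‖ < 1) (hz : ‖z‖ < 1) : mobius (-a) (mobius a z) = z := by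
  have hD := one_sub_conj_mul_ne_zero ha hz
  have hA := one_sub_conj_mul_ne_zero ha ha
  simp only [mobius, map_neg, neg_mul, sub_neg_eq_add]
  have hA' : 1 - conj a * z + conj a * (z - a) ≠ 0 := by convert hA using 1; ring
  rw [div_add' _ _ _ hD, ← mul_div_assoc, one_add_div hD, div_div_div_cancel_right₀ hD,
    div_eq_iff hA']
  ring

lemma norm_one_sub_mul_lt {r : ℝ} {t : ℂ} (hr : 1 < r) (ht : r * ‖t‖ < 1) :
    ‖1 - ((r ^ 2 : ℝ) : ℂ) * t‖ < r * ‖1 - t‖ := by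
  -- `r² |1 - t|² - |1 - r² t|² = (r² - 1) (1 - r² |t|²)`
  have hpos : 0 < (r ^ 2 - 1) * (1 - r ^ 2 * normSq t) := by
    have : (r * ‖t‖) ^ 2 < 1 := pow_lt_one₀ (by positivity) ht two_ne_zero
    rw [← Complex.sq_norm]; apply mul_pos <;> nlinarith
  refine lt_of_pow_lt_pow_left₀ 2 (by positivity) ?_
  rw [mul_pow, Complex.sq_norm, Complex.sq_norm]
  simp only [normSq_apply, sub_re, sub_im, mul_re, mul_im, one_re, one_im, ofReal_re,
    ofReal_im] at hpos ⊢
  nlinarith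

lemma pdist_lt_pdist_mul {r : ℝ} (hr : 1 < r) (hab : a ≠ b) (ha : ‖(r : ℂ) * a‖ < 1)
    (hb : ‖(r : ℂ) * b‖ < 1) : pdist a b < pdist (r * a) (r * b) := by
  have hr0 : (0 : ℝ) < r := by linarith
  have hdenom : 1 - conj ((r : ℂ) * a) * (r * b) = 1 - ((r ^ 2 : ℝ) : ℂ) * (conj a * b) := by
    rw [map_mul, conj_ofReal]; push_cast; ring
  have hrab : r * ‖conj a * b‖ < 1 := by
    rw [norm_mul, norm_conj]
    rw [norm_mul, norm_real, Real.norm_of_nonneg hr0.le] at ha hb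
    nlinarith [norm_nonneg a, norm_nonneg b, mul_nonneg (norm_nonneg a) (norm_nonneg b)]
  have hne : 1 - ((r ^ 2 : ℝ) : ℂ) * (conj a * b) ≠ 0 := hdenom ▸ one_sub_conj_mul_ne_zero ha hb
  have hne' : 1 - conj a * b ≠ 0 := by
    rw [sub_ne_zero]
    intro h
    rw [← h, norm_one] at hrab
    linarith
  rw [pdist, pdist, hdenom, ← mul_sub, norm_div, norm_div, norm_mul, norm_real,
    Real.norm_of_nonneg hr0.le, div_lt_div_iff₀ (norm_pos_iff.mpr hne') (norm_pos_iff.mpr hne)]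
  calc ‖a - b‖ * ‖1 - ((r ^ 2 : ℝ) : ℂ) * (conj a * b)‖ < ‖a - b‖ * (r * ‖1 - conj a * b‖) :=
        mul_lt_mul_of_pos_left (norm_one_sub_mul_lt hr hrab)
          (norm_pos_iff.mpr (sub_ne_zero.mpr hab))
    _ = r * ‖a - b‖ * ‖1 - conj a * b‖ := by ring

end Disc

section PickBody

variable {m : ℕ} {Ω : Set (Fin m → ℂ)} {z1 z2 : Fin m → ℂ}

lemma mapsTo_ball_inv_mul {E : Type*} {f : E → ℂ} {s : Set E} {C r : ℝ}
    (hf : ∀ x ∈ s, ‖f x‖ ≤ C) (hCr : C < r) (hr : 0 < r) :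
    MapsTo (fun x => ((r⁻¹ : ℝ) : ℂ) * f x) s (ball 0 1) := fun x hx => by
  rw [mem_ball_zero_iff, norm_mul, norm_real, Real.norm_of_nonneg (inv_pos.mpr hr).le,
    inv_mul_lt_one₀ hr]
  exact (hf x hx).trans_lt hCr

lemma bddAbove_pdist_of_mapsTo_ball (hz1 : z1 ∈ Ω) (hz2 : z2 ∈ Ω) :
    BddAbove {r : ℝ | ∃ g : (Fin m → ℂ) → ℂ, DifferentiableOn ℂ g Ω ∧
      MapsTo g Ω (ball (0:ℂ) 1) ∧ r = pdist (g z1) (g z2)} := by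
  refine ⟨1, ?_⟩
  rintro _ ⟨g, -, hgΩ, rfl⟩
  exact (pdist_lt_one (mem_ball_zero_iff.mp (hgΩ hz1)) (mem_ball_zero_iff.mp (hgΩ hz2))).le

lemma pdist_le_cStar (hz1 : z1 ∈ Ω) (hz2 : z2 ∈ Ω) {g : (Fin m → ℂ) → ℂ}
    (hg : DifferentiableOn ℂ g Ω) (hgΩ : MapsTo g Ω (ball 0 1)) :
    pdist (g z1) (g z2) ≤ cStar m Ω z1 z2 :=
  le_csSup (bddAbove_pdist_of_mapsTo_ball hz1 hz2) ⟨g, hg, hgΩ, rfl⟩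

lemma exists_lt_pdist_of_lt_cStar {r : ℝ} (hr : r < cStar m Ω z1 z2) :
    ∃ g : (Fin m → ℂ) → ℂ, DifferentiableOn ℂ g Ω ∧ MapsTo g Ω (ball 0 1) ∧
      r < pdist (g z1) (g z2) := by
  obtain ⟨_, ⟨g, hg, hgΩ, rfl⟩, hlt⟩ := exists_lt_of_lt_csSup (by
    exact ⟨_, fun _ => 0, differentiableOn_const 0, fun _ _ => mem_ball_self one_pos, rfl⟩) hr
  exact ⟨g, hg, hgΩ, hlt⟩

lemma cStar_pos (hz1 : z1 ∈ Ω) (hz2 : z2 ∈ Ω) {h : (Fin m → ℂ) → ℂ} {C : ℝ}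
    (hh : DifferentiableOn ℂ h Ω) (hC : ∀ x ∈ Ω, ‖h x‖ ≤ C) (hsep : h z1 ≠ h z2) :
    0 < cStar m Ω z1 z2 := by
  have hC0 : 0 < C + 1 := by linarith [(norm_nonneg _).trans (hC z1 hz1)]
  have hgΩ := mapsTo_ball_inv_mul hC (lt_add_one C) hC0
  refine (pdist_pos (mem_ball_zero_iff.mp (hgΩ hz1)) (mem_ball_zero_iff.mp (hgΩ hz2)) ?_).trans_le
    (pdist_le_cStar hz1 hz2 (hh.const_mul _) hgΩ)
  exact fun h => hsep (mul_left_cancel₀ (ofReal_ne_zero.mpr (inv_ne_zero hC0.ne')) h)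

lemma norm_lt_one_of_mem_pickBody2 {w1 w2 : ℂ} (hw : (w1, w2) ∈ PickBody2 m Ω z1 z2)
    (hz1 : z1 ∈ Ω) (hz2 : z2 ∈ Ω) : ‖w1‖ < 1 ∧ ‖w2‖ < 1 := by
  obtain ⟨f, -, ⟨c, hc1, hfc⟩, rfl, rfl⟩ := hw
  exact ⟨(hfc z1 hz1).trans_lt hc1, (hfc z2 hz2).trans_lt hc1⟩

lemma pdist_lt_cStar_of_mem_pickBody2 {w1 w2 : ℂ} (hw : (w1, w2) ∈ PickBody2 m Ω z1 z2)
    (hz1 : z1 ∈ Ω) (hz2 : z2 ∈ Ω) (hpos : 0 < cStar m Ω z1 z2) :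
    pdist w1 w2 < cStar m Ω z1 z2 := by
  obtain ⟨f, hf, ⟨c, hc1, hfc⟩, rfl, rfl⟩ := hw
  rcases eq_or_ne (f z1) (f z2) with heq | hne
  · simpa [heq, pdist] using hpos
  obtain ⟨e, hce, he1⟩ := exists_between hc1
  have he0 : 0 < e := ((norm_nonneg _).trans (hfc z1 hz1)).trans_lt hce
  have hgΩ := mapsTo_ball_inv_mul hfc hce he0
  refine (pdist_lt_pdist_mul (one_lt_inv₀ he0 |>.mpr he1) hne ?_ ?_).trans_le
    (pdist_le_cStar hz1 hz2 (hf.const_mul _) hgΩ)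
  · exact mem_ball_zero_iff.mp (hgΩ hz1)
  · exact mem_ball_zero_iff.mp (hgΩ hz2)

lemma mobius_mem_pickBody2 {a w1 w2 : ℂ} (ha : ‖a‖ < 1) (hw : (w1, w2) ∈ PickBody2 m Ω z1 z2) :
    (mobius a w1, mobius a w2) ∈ PickBody2 m Ω z1 z2 := by
  obtain ⟨f, hf, ⟨c, hc1, hfc⟩, rfl, rfl⟩ := hw
  have hfΩ : MapsTo f Ω (closedBall 0 c) := fun x hx => mem_closedBall_zero_iff.mpr (hfc x hx)
  have hcD : closedBall (0 : ℂ) c ⊆ ball 0 1 := closedBall_subset_ball hc1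
  have hK : IsCompact (mobius a '' closedBall 0 c) :=
    (isCompact_closedBall 0 c).image_of_continuousOn
      ((differentiableOn_mobius ha).continuousOn.mono hcD)
  obtain ⟨c', hc'1, hKc'⟩ := exists_lt_subset_ball hK.isClosed
    (((mapsTo_mobius ha).mono_left hcD).image_subset)
  refine ⟨fun x => mobius a (f x), (differentiableOn_mobius ha).comp hf (hfΩ.mono_right hcD),
    ⟨c', hc'1, fun x hx => ?_⟩, rfl, rfl⟩
  exact (mem_ball_zero_iff.mp (hKc' (mem_image_of_mem _ (hfΩ hx)))).le

lemma mul_mobius_mem_pickBody2 {g : (Fin m → ℂ) → ℂ} {l : ℂ} (hg : DifferentiableOn ℂ g Ω)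
    (hgΩ : MapsTo g Ω (ball 0 1)) (hz1 : z1 ∈ Ω) (hl : ‖l‖ < 1) :
    (0, l * mobius (g z1) (g z2)) ∈ PickBody2 m Ω z1 z2 := by
  have ha := mem_ball_zero_iff.mp (hgΩ hz1)
  refine ⟨fun x => l * mobius (g z1) (g x),
    ((differentiableOn_mobius ha).comp hg hgΩ).const_mul l, ⟨‖l‖, hl, fun x hx => ?_⟩,
    by simp, rfl⟩
  rw [norm_mul]
  exact mul_le_of_le_one_right (norm_nonneg l)
    (mem_ball_zero_iff.mp (mapsTo_mobius ha (hgΩ hx))).le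

lemma mem_pickBody2_of_pdist_lt_cStar {w1 w2 : ℂ} (hw1 : ‖w1‖ < 1) (hw2 : ‖w2‖ < 1)
    (hz1 : z1 ∈ Ω) (hlt : pdist w1 w2 < cStar m Ω z1 z2) : (w1, w2) ∈ PickBody2 m Ω z1 z2 := by
  obtain ⟨g, hg, hgΩ, hρ⟩ := exists_lt_pdist_of_lt_cStar hlt
  have hu : pdist w1 w2 < ‖mobius (g z1) (g z2)‖ := norm_mobius (g z1) (g z2) ▸ hρ
  have hu0 : mobius (g z1) (g z2) ≠ 0 := norm_pos_iff.mp ((norm_nonneg _).trans_lt hu)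
  have hl : ‖mobius w1 w2 / mobius (g z1) (g z2)‖ < 1 := by
    rwa [norm_div, norm_mobius, div_lt_one (norm_pos_iff.mpr hu0)]
  have h0 := mul_mobius_mem_pickBody2 (z2 := z2) hg hgΩ hz1 hl
  rw [div_mul_cancel₀ _ hu0] at h0
  have h := mobius_mem_pickBody2 (a := -w1) (by rwa [norm_neg]) h0
  rwa [mobius_neg_zero, mobius_neg_mobius hw1 hw2] at h

end PickBody

theorem stmt3_general (m : ℕ) (Ω : Set (Fin m → ℂ))
    (hCara : ∀ x ∈ Ω, ∀ y ∈ Ω, x ≠ y → ∃ f : (Fin m → ℂ) → ℂ,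
      DifferentiableOn ℂ f Ω ∧ (∃ c : ℝ, ∀ x' ∈ Ω, ‖f x'‖ ≤ c) ∧ f x ≠ f y)
    (z1 z2 : Fin m → ℂ) (hz1 : z1 ∈ Ω) (hz2 : z2 ∈ Ω) (hne : z1 ≠ z2) :
    PickBody2 m Ω z1 z2 =
      {p : ℂ × ℂ | p.1 ∈ ball (0:ℂ) 1 ∧ p.2 ∈ ball (0:ℂ) 1 ∧
        pdist p.1 p.2 < cStar m Ω z1 z2} := by
  obtain ⟨h, hh, ⟨C, hC⟩, hsep⟩ := hCara z1 hz1 z2 hz2 hne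
  have hpos := cStar_pos hz1 hz2 hh hC hsep
  ext ⟨w1, w2⟩
  refine ⟨fun hw => ?_, fun ⟨hw1, hw2, hlt⟩ => ?_⟩
  · obtain ⟨hw1, hw2⟩ := norm_lt_one_of_mem_pickBody2 hw hz1 hz2
    exact ⟨mem_ball_zero_iff.mpr hw1, mem_ball_zero_iff.mpr hw2,
      pdist_lt_cStar_of_mem_pickBody2 hw hz1 hz2 hpos⟩
  · exact mem_pickBody2_of_pdist_lt_cStar (mem_ball_zero_iff.mp hw1) (mem_ball_zero_iff.mp hw2)
      hz1 hlt

theorem stmt3 (m : ℕ) (Ω : Set (Fin m → ℂ)) (hopen : IsOpen Ω) (hconn : IsConnected Ω)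
    (hCara : ∀ x ∈ Ω, ∀ y ∈ Ω, x ≠ y → ∃ f : (Fin m → ℂ) → ℂ,
      DifferentiableOn ℂ f Ω ∧ (∃ c : ℝ, ∀ x' ∈ Ω, ‖f x'‖ ≤ c) ∧ f x ≠ f y)
    (z1 z2 : Fin m → ℂ) (hz1 : z1 ∈ Ω) (hz2 : z2 ∈ Ω) (hne : z1 ≠ z2) :
    PickBody2 m Ω z1 z2 =
      {p : ℂ × ℂ | p.1 ∈ ball (0:ℂ) 1 ∧ p.2 ∈ ball (0:ℂ) 1 ∧
        pdist p.1 p.2 < cStar m Ω z1 z2} :=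
  stmt3_general m Ω hCara z1 z2 hz1 hz2 hne
end

section
/- For any r ∈ (0,1), the domain D²_r = {(w1,w2) ∈ D×D : m(w1,w2) < r} is convex. -/
open Complex Metric Set

/-!
For `z, w` in the disc, the identity `|1 - z̄w|² = (1 - |z|²)(1 - |w|²) + |z - w|²` turns
`m(z, w) < r` into `√(1 - r²) |z - w| < r √((1 - |z|²)(1 - |w|²))`. The left side is convex in
`(z, w)`, and the right side is concave: `1 - |z|²` is concave, and the geometric mean of two
nonnegative concave functions is concave by Cauchy–Schwarz. Hence `D²_r` is a strict sublevel
set of a convex function on the convex set `D × D`.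
-/

lemma sqrt_mul_sqrt_add_sqrt_mul_sqrt_le {x₁ x₂ y₁ y₂ : ℝ} (hx₁ : 0 ≤ x₁) (hx₂ : 0 ≤ x₂)
    (hy₁ : 0 ≤ y₁) (hy₂ : 0 ≤ y₂) :
    √x₁ * √y₁ + √x₂ * √y₂ ≤ √(x₁ + x₂) * √(y₁ + y₂) := by
  simpa [Fin.sum_univ_two] using Real.sum_sqrt_mul_sqrt_le Finset.univ (f := ![x₁, x₂])
    (g := ![y₁, y₂]) (Fin.forall_fin_two.2 ⟨hx₁, hx₂⟩) (Fin.forall_fin_two.2 ⟨hy₁, hy₂⟩)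

theorem ConcaveOn.sqrt_mul {E : Type*} [AddCommMonoid E] [Module ℝ E] {s : Set E} {f g : E → ℝ}
    (hf : ConcaveOn ℝ s f) (hg : ConcaveOn ℝ s g) (hf₀ : ∀ x ∈ s, 0 ≤ f x)
    (hg₀ : ∀ x ∈ s, 0 ≤ g x) :
    ConcaveOn ℝ s fun x ↦ √(f x * g x) := by
  refine ⟨hf.1, fun x hx y hy a b ha hb hab ↦ ?_⟩
  have hxy := hf.1 hx hy ha hb hab
  have mul_sqrt_mul_eq {t u v : ℝ} (ht : 0 ≤ t) (hu : 0 ≤ u) :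
      t * √(u * v) = √(t * u) * √(t * v) := by
    rw [← Real.sqrt_mul (by positivity), show t * u * (t * v) = t ^ 2 * (u * v) by ring,
      Real.sqrt_mul (sq_nonneg t), Real.sqrt_sq ht]
  calc a • √(f x * g x) + b • √(f y * g y)
      = √(a * f x) * √(a * g x) + √(b * f y) * √(b * g y) := by
        rw [smul_eq_mul, smul_eq_mul, mul_sqrt_mul_eq ha (hf₀ x hx),
          mul_sqrt_mul_eq hb (hf₀ y hy)]
    _ ≤ √(a * f x + b * f y) * √(a * g x + b * g y) := by
        exact sqrt_mul_sqrt_add_sqrt_mul_sqrt_le (mul_nonneg ha (hf₀ x hx))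
          (mul_nonneg hb (hf₀ y hy)) (mul_nonneg ha (hg₀ x hx)) (mul_nonneg hb (hg₀ y hy))
    _ ≤ √(f (a • x + b • y)) * √(g (a • x + b • y)) := by
        gcongr
        · exact hf.2 hx hy ha hb hab
        · exact hg.2 hx hy ha hb hab
    _ = √(f (a • x + b • y) * g (a • x + b • y)) := (Real.sqrt_mul (hf₀ _ hxy) _).symm

theorem concaveOn_one_sub_norm_sq {E : Type*} [SeminormedAddCommGroup E] [NormedSpace ℝ E] :
    ConcaveOn ℝ univ fun x : E ↦ 1 - ‖x‖ ^ 2 :=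
  (concaveOn_const 1 convex_univ).sub
    ((convexOn_norm convex_univ).pow (fun _ _ ↦ norm_nonneg _) 2)

theorem convexOn_mul_norm_sub_sub_mul_sqrt {E : Type*} [SeminormedAddCommGroup E]
    [NormedSpace ℝ E] {c r : ℝ} (hc : 0 ≤ c) (hr : 0 ≤ r) :
    ConvexOn ℝ (ball (0 : E) 1 ×ˢ ball (0 : E) 1) fun p : E × E ↦
      c * ‖p.1 - p.2‖ - r * √((1 - ‖p.1‖ ^ 2) * (1 - ‖p.2‖ ^ 2)) := by
  have hS : Convex ℝ (ball (0 : E) 1 ×ˢ ball (0 : E) 1) := (convex_ball 0 1).prod (convex_ball 0 1)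
  have hdist : ConvexOn ℝ (ball (0 : E) 1 ×ˢ ball (0 : E) 1) fun p : E × E ↦ ‖p.1 - p.2‖ :=
    ((convexOn_norm convex_univ).comp_linearMap
      (LinearMap.fst ℝ E E - LinearMap.snd ℝ E E)).subset (subset_univ _) hS
  have hfst : ConcaveOn ℝ (ball (0 : E) 1 ×ˢ ball (0 : E) 1) fun p : E × E ↦ 1 - ‖p.1‖ ^ 2 :=
    (concaveOn_one_sub_norm_sq.comp_linearMap (LinearMap.fst ℝ E E)).subset (subset_univ _) hS
  have hsnd : ConcaveOn ℝ (ball (0 : E) 1 ×ˢ ball (0 : E) 1) fun p : E × E ↦ 1 - ‖p.2‖ ^ 2 :=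
    (concaveOn_one_sub_norm_sq.comp_linearMap (LinearMap.snd ℝ E E)).subset (subset_univ _) hS
  have one_sub_sq_nonneg {x : E} (hx : x ∈ ball (0 : E) 1) : 0 ≤ 1 - ‖x‖ ^ 2 :=
    sub_nonneg.2 (pow_le_one₀ (norm_nonneg x) (mem_ball_zero_iff.1 hx).le)
  exact (hdist.smul hc).sub ((hfst.sqrt_mul hsnd (fun p hp ↦ one_sub_sq_nonneg hp.1)
    (fun p hp ↦ one_sub_sq_nonneg hp.2)).smul hr)

lemma norm_one_sub_conj_mul_sq (z w : ℂ) :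
    ‖1 - (starRingEnd ℂ) z * w‖ ^ 2 = (1 - ‖z‖ ^ 2) * (1 - ‖w‖ ^ 2) + ‖z - w‖ ^ 2 := by
  simp only [Complex.sq_norm, Complex.normSq_apply, Complex.sub_re, Complex.sub_im,
    Complex.mul_re, Complex.mul_im, Complex.conj_re, Complex.conj_im, Complex.one_re,
    Complex.one_im]
  ring

lemma pdist_lt_iff {z w : ℂ} (hz : ‖z‖ < 1) (hw : ‖w‖ < 1) {r : ℝ} (hr₀ : 0 ≤ r) (hr₁ : r ≤ 1) :
    pdist z w < r ↔ √(1 - r ^ 2) * ‖z - w‖ < r * √((1 - ‖z‖ ^ 2) * (1 - ‖w‖ ^ 2)) := by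
  have hzw : 0 < (1 - ‖z‖ ^ 2) * (1 - ‖w‖ ^ 2) := by
    have := norm_nonneg z; have := norm_nonneg w
    apply mul_pos <;> nlinarith
  have hden : 0 < ‖1 - (starRingEnd ℂ) z * w‖ := by
    have := norm_one_sub_conj_mul_sq z w
    nlinarith [norm_nonneg (z - w), norm_nonneg (1 - (starRingEnd ℂ) z * w)]
  calc pdist z w < r ↔ ‖z - w‖ < r * ‖1 - (starRingEnd ℂ) z * w‖ := by
        rw [pdist, norm_div, div_lt_iff₀ hden]
    _ ↔ ‖z - w‖ ^ 2 < (r * ‖1 - (starRingEnd ℂ) z * w‖) ^ 2 :=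
        (pow_lt_pow_iff_left₀ (norm_nonneg _) (by positivity) two_ne_zero).symm
    _ ↔ (√(1 - r ^ 2) * ‖z - w‖) ^ 2 < (r * √((1 - ‖z‖ ^ 2) * (1 - ‖w‖ ^ 2))) ^ 2 := by
        rw [mul_pow, mul_pow, mul_pow, norm_one_sub_conj_mul_sq, Real.sq_sqrt (by nlinarith),
          Real.sq_sqrt hzw.le]
        constructor <;> intro h <;> linarith
    _ ↔ _ := pow_lt_pow_iff_left₀ (by positivity) (by positivity) two_ne_zero

theorem stmt4 (r : ℝ) (hr : r ∈ Set.Ioo (0:ℝ) 1) :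
    Convex ℝ {p : ℂ × ℂ | p.1 ∈ ball (0:ℂ) 1 ∧ p.2 ∈ ball (0:ℂ) 1 ∧ pdist p.1 p.2 < r} := by
  have hset : {p : ℂ × ℂ | p.1 ∈ ball (0:ℂ) 1 ∧ p.2 ∈ ball (0:ℂ) 1 ∧ pdist p.1 p.2 < r} =
      {p ∈ ball (0 : ℂ) 1 ×ˢ ball (0 : ℂ) 1 |
        √(1 - r ^ 2) * ‖p.1 - p.2‖ - r * √((1 - ‖p.1‖ ^ 2) * (1 - ‖p.2‖ ^ 2)) < 0} := by
    ext ⟨z, w⟩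
    simp only [mem_ofPred_eq, mem_prod, mem_ball_zero_iff, sub_neg, and_assoc]
    exact and_congr_right fun hz ↦ and_congr_right fun hw ↦ pdist_lt_iff hz hw hr.1.le hr.2.le
  rw [hset]
  exact (convexOn_mul_norm_sub_sub_mul_sqrt (Real.sqrt_nonneg (1 - r ^ 2)) hr.1.le).convex_lt 0
end

section
/- When Ω = D and α = (z1,…,zn) is the tuple of the nodes themselves, d_α(z_i, z_j) = m(z_i, z_j) for all i, j. -/
open Complex Metric Set

/-- The invariant function `d_α` for the open unit disc. -/
noncomputable def dInvD (n : ℕ) (z : Fin n → ℂ) (α : Fin n → ℂ) (i j : Fin n) : ℝ :=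
  sSup {r : ℝ | ∃ f : ℂ → ℂ, DifferentiableOn ℂ f (ball (0:ℂ) 1) ∧
    MapsTo f (ball (0:ℂ) 1) (ball (0:ℂ) 1) ∧ (∃ c : ℂ, ∀ k, f (z k) = c * α k) ∧
    r = pdist (f (z i)) (f (z j))}

/-!
The identity map is admissible for `α = z`, so `d_z(z_i, z_j) ≥ m(z_i, z_j)`; the reverse
inequality is the Schwarz–Pick lemma, obtained from the Schwarz lemma by conjugating with the
involutive disc automorphisms `w ↦ (a - w) / (1 - ā w)`.
-/

open ComplexConjugate

namespace Disc

noncomputable def mobius (a w : ℂ) : ℂ := (a - w) / (1 - conj a * w)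

theorem pdist_eq_norm_mobius (a b : ℂ) : pdist a b = ‖mobius a b‖ := rfl

theorem normSq_one_sub_conj_mul (a w : ℂ) :
    normSq (1 - conj a * w) = normSq (a - w) + (1 - normSq a) * (1 - normSq w) := by
  simp only [normSq_apply, sub_re, sub_im, mul_re, mul_im, conj_re, conj_im, one_re, one_im]
  ring

variable {a w : ℂ}

theorem normSq_sub_lt_normSq_one_sub_conj_mul (ha : ‖a‖ < 1) (hw : ‖w‖ < 1) :
    normSq (a - w) < normSq (1 - conj a * w) := by
  have ha' : normSq a < 1 := by rw [← Complex.sq_norm]; nlinarith [norm_nonneg a]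
  have hw' : normSq w < 1 := by rw [← Complex.sq_norm]; nlinarith [norm_nonneg w]
  rw [normSq_one_sub_conj_mul]
  nlinarith

theorem one_sub_conj_mul_ne_zero (ha : ‖a‖ < 1) (hw : ‖w‖ < 1) : 1 - conj a * w ≠ 0 :=
  normSq_pos.1 ((normSq_nonneg _).trans_lt (normSq_sub_lt_normSq_one_sub_conj_mul ha hw))

theorem norm_mobius_lt_one (ha : ‖a‖ < 1) (hw : ‖w‖ < 1) : ‖mobius a w‖ < 1 := by
  have hsq : ‖a - w‖ ^ 2 < ‖1 - conj a * w‖ ^ 2 := by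
    simpa only [Complex.sq_norm] using normSq_sub_lt_normSq_one_sub_conj_mul ha hw
  rw [mobius, norm_div, div_lt_one (norm_pos_iff.2 (one_sub_conj_mul_ne_zero ha hw))]
  exact lt_of_pow_lt_pow_left₀ 2 (norm_nonneg _) hsq

theorem mobius_mobius (ha : ‖a‖ < 1) (hw : ‖w‖ < 1) : mobius a (mobius a w) = w := by
  have hD := one_sub_conj_mul_ne_zero ha hw
  have haa := one_sub_conj_mul_ne_zero ha ha
  have hnum : a - mobius a w = w * (1 - conj a * a) / (1 - conj a * w) := by
    rw [mobius, eq_div_iff hD, sub_mul, div_mul_cancel₀ _ hD]; ring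
  have hden : 1 - conj a * mobius a w = (1 - conj a * a) / (1 - conj a * w) := by
    rw [mobius, eq_div_iff hD, sub_mul, mul_assoc, div_mul_cancel₀ _ hD]; ring
  rw [mobius, hnum, hden, div_div_div_cancel_right₀ hD, mul_div_cancel_right₀ _ haa]

@[simp] theorem mobius_self (a : ℂ) : mobius a a = 0 := by simp [mobius]

@[simp] theorem mobius_zero (a : ℂ) : mobius a 0 = a := by simp [mobius]

theorem differentiableOn_mobius (ha : ‖a‖ < 1) : DifferentiableOn ℂ (mobius a) (ball 0 1) :=
  fun _ hw => ((differentiableAt_const a).sub differentiableAt_id).div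
    ((differentiableAt_const 1).sub ((differentiableAt_const _).mul differentiableAt_id))
    (one_sub_conj_mul_ne_zero ha (mem_ball_zero_iff.1 hw)) |>.differentiableWithinAt

theorem mapsTo_mobius (ha : ‖a‖ < 1) : MapsTo (mobius a) (ball 0 1) (ball 0 1) := fun _ hw =>
  mem_ball_zero_iff.2 (norm_mobius_lt_one ha (mem_ball_zero_iff.1 hw))

/-- **Schwarz–Pick lemma**. -/
theorem pdist_le_pdist_of_mapsTo_ball {f : ℂ → ℂ} (hd : DifferentiableOn ℂ f (ball 0 1))
    (hm : MapsTo f (ball 0 1) (ball 0 1)) {b : ℂ} (ha : a ∈ ball (0 : ℂ) 1)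
    (hb : b ∈ ball (0 : ℂ) 1) : pdist (f a) (f b) ≤ pdist a b := by
  have hfa : ‖f a‖ < 1 := mem_ball_zero_iff.1 (hm ha)
  rw [mem_ball_zero_iff] at ha hb
  set g : ℂ → ℂ := mobius (f a) ∘ f ∘ mobius a
  have hgd : DifferentiableOn ℂ g (ball 0 1) :=
    (differentiableOn_mobius hfa).comp (hd.comp (differentiableOn_mobius ha) (mapsTo_mobius ha))
      (hm.comp (mapsTo_mobius ha))
  have hgm : MapsTo g (ball 0 1) (ball 0 1) :=
    (mapsTo_mobius hfa).comp (hm.comp (mapsTo_mobius ha))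
  have hg0 : g 0 = 0 := by simp [g]
  have hgb : g (mobius a b) = mobius (f a) (f b) := by simp [g, mobius_mobius ha hb]
  simpa only [pdist_eq_norm_mobius, hgb] using
    norm_le_norm_of_mapsTo_ball hgd (hgm.mono_right ball_subset_closedBall) hg0
      (norm_mobius_lt_one ha hb)

end Disc

theorem stmt10_general (n : ℕ) (z : Fin n → ℂ) (hz : ∀ j, z j ∈ ball (0:ℂ) 1)
    (i j : Fin n) :
    dInvD n z z i j = pdist (z i) (z j) := by
  refine IsGreatest.csSup_eq ⟨?_, ?_⟩
  · exact ⟨id, differentiableOn_id, mapsTo_id _, ⟨1, fun k => (one_mul _).symm⟩, rfl⟩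
  · rintro _ ⟨f, hfd, hfm, -, rfl⟩
    exact Disc.pdist_le_pdist_of_mapsTo_ball hfd hfm (hz i) (hz j)

theorem stmt10 (n : ℕ) (z : Fin n → ℂ) (hz : ∀ j, z j ∈ ball (0:ℂ) 1)
    (hinj : Function.Injective z) (i j : Fin n) :
    dInvD n z z i j = pdist (z i) (z j) :=
  stmt10_general n z hz i j
end

section
/- An n-point Pick interpolation problem z_j ↦ w_j (z_j ∈ Ω distinct, w_j ∈ D) has a holomorphic solution f: Ω → D if and only if either all w_j are equal, or there exists a pair (i,j) with w_i ≠ w_j and m(w_i, w_j) ≤ d^Ω_{(z,w)}(z_i, z_j). -/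
open Complex Metric Set

noncomputable def dInv (m n : ℕ) (Ω : Set (Fin m → ℂ)) (z : Fin n → (Fin m → ℂ))
    (α : Fin n → ℂ) (i j : Fin n) : ℝ :=
  sSup {r : ℝ | ∃ f : (Fin m → ℂ) → ℂ, DifferentiableOn ℂ f Ω ∧
    MapsTo f Ω (ball (0:ℂ) 1) ∧ (∃ c : ℂ, ∀ k, f (z k) = c * α k) ∧
    r = pdist (f (z i)) (f (z j))}

/-!
Necessity: a solution is itself a competitor in the supremum defining `dInv`, with scalar `1`.

Sufficiency: take competitors `f ν`, with `f ν (z k) = c ν * w k`, whose values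
`pdist (f ν (z i)) (f ν (z j))` tend to `dInv`. Along an ultrafilter they converge pointwise;
being bounded by `1` they are equi-Lipschitz by the Schwarz lemma, so the convergence is locally
uniform, and by the Cauchy estimates so is that of the derivatives. The limit `g` is therefore
holomorphic, its values at the `z k` still lie on the line `ℂ ∙ w`, and by the maximum principle
it maps `Ω` into the disc because `w i ≠ w j`: the supremum is attained. Since `ζ ↦ c * ζ`
strictly decreases `pdist` when `‖c‖ < 1`, the hypothesis `pdist (w i) (w j) ≤ dInv` forces
`‖c‖ ≥ 1`, and then `c⁻¹ * g` solves the problem.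
-/

open Filter Topology ComplexConjugate

section PseudoHyperbolic

theorem sq_pdist (a b : ℂ) : pdist a b ^ 2 = normSq (a - b) / normSq (1 - conj a * b) := by
  rw [pdist, norm_div, div_pow, Complex.sq_norm, Complex.sq_norm]

theorem normSq_one_sub_real_mul (t : ℝ) (u : ℂ) :
    normSq (1 - t * u) - t * normSq (1 - u) = (1 - t) * (1 - t * normSq u) := by
  simp only [normSq_apply, sub_re, sub_im, one_re, one_im, mul_re, mul_im, ofReal_re, ofReal_im]
  ring

theorem normSq_lt_one_of_norm_lt_one {a : ℂ} (ha : ‖a‖ < 1) : normSq a < 1 := by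
  rw [normSq_eq_norm_sq]; nlinarith [norm_nonneg a]

theorem conj_mul_ne_one {a b : ℂ} (ha : ‖a‖ < 1) (hb : ‖b‖ ≤ 1) : conj a * b ≠ 1 := by
  intro h
  have := congrArg norm h
  rw [norm_mul, norm_conj, norm_one] at this
  nlinarith [norm_nonneg a, norm_nonneg b]

theorem pdist_le_one {a b : ℂ} (ha : ‖a‖ < 1) (hb : ‖b‖ < 1) : pdist a b ≤ 1 := by
  have hD : 0 < normSq (1 - conj a * b) :=
    normSq_pos.2 (sub_ne_zero.2 (conj_mul_ne_one ha hb.le).symm)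
  have hid : normSq (1 - conj a * b) - normSq (a - b) = (1 - normSq a) * (1 - normSq b) := by
    simp only [normSq_apply, sub_re, sub_im, one_re, one_im, mul_re, mul_im, conj_re, conj_im]
    ring
  have hprod : 0 < (1 - normSq a) * (1 - normSq b) := mul_pos
    (sub_pos.2 (normSq_lt_one_of_norm_lt_one ha)) (sub_pos.2 (normSq_lt_one_of_norm_lt_one hb))
  refine (pow_le_one_iff_of_nonneg (norm_nonneg _) two_ne_zero).1 ?_
  rw [← pdist, sq_pdist, div_le_one hD]
  linarith

theorem pdist_mul_lt_pdist {a b c : ℂ} (ha : ‖a‖ < 1) (hb : ‖b‖ < 1) (hab : a ≠ b)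
    (hc : ‖c‖ < 1) : pdist (c * a) (c * b) < pdist a b := by
  set t := normSq c
  set u := conj a * b
  have ht0 : 0 ≤ t := normSq_nonneg c
  have ht1 : t < 1 := normSq_lt_one_of_norm_lt_one hc
  have hu : normSq u < 1 := by
    rw [normSq_mul, normSq_conj]
    nlinarith [normSq_lt_one_of_norm_lt_one ha, normSq_lt_one_of_norm_lt_one hb,
      normSq_nonneg a, normSq_nonneg b]
  have hscale : conj (c * a) * (c * b) = t * u := by
    rw [normSq_eq_conj_mul_self, map_mul]; ring
  have hN : 0 < normSq (a - b) := normSq_pos.2 (sub_ne_zero.2 hab)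
  have hD : 0 < normSq (1 - u) := normSq_pos.2 (sub_ne_zero.2 (conj_mul_ne_one ha hb.le).symm)
  have hgap : 0 < (1 - t) * (1 - t * normSq u) := mul_pos (by linarith) (by nlinarith)
  have hid := normSq_one_sub_real_mul t u
  refine (pow_lt_pow_iff_left₀ (norm_nonneg _) (norm_nonneg _) two_ne_zero).1 ?_
  rw [← pdist, ← pdist, sq_pdist, sq_pdist, hscale, ← mul_sub, normSq_mul]
  change t * normSq (a - b) / normSq (1 - t * u) < normSq (a - b) / normSq (1 - u)
  rw [div_lt_div_iff₀ (by nlinarith) hD]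
  nlinarith [mul_pos hN hgap]

theorem continuousAt_pdist {a b : ℂ} (h : conj a * b ≠ 1) :
    ContinuousAt (fun p : ℂ × ℂ ↦ pdist p.1 p.2) (a, b) :=
  ((continuous_fst.sub continuous_snd).continuousAt.div
    (by fun_prop : Continuous fun p : ℂ × ℂ ↦ 1 - conj p.1 * p.2).continuousAt
    (sub_ne_zero.2 h.symm)).norm

end PseudoHyperbolic

section Vitali

theorem tendstoUniformlyOn_of_lipschitzOnWith {ι X Y : Type*} [PseudoMetricSpace X]
    [PseudoMetricSpace Y] {f : ι → X → Y} {g : X → Y} {K : NNReal} {s : Set X} {l : Filter ι}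
    (hs : IsCompact s) (hf : ∀ i, LipschitzOnWith K (f i) s)
    (hg : ∀ x ∈ s, Tendsto (fun i ↦ f i x) l (𝓝 (g x))) : TendstoUniformlyOn f g l s := by
  have := (EquicontinuousOn.tendsto_uniformOnFun_iff_pi' (𝔖 := {s}) (by simpa using hs)
    (by simpa using (LipschitzOnWith.uniformEquicontinuousOn f K hf).equicontinuousOn) l g).2
    (by simpa [tendsto_pi_nhds] using fun x hx ↦ hg x hx)
  simpa [UniformOnFun.tendsto_iff_tendstoUniformlyOn, Function.comp_def] using this

variable {ι E F : Type*} [NormedAddCommGroup E] [NormedAddCommGroup F]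

theorem mapsTo_closedBall_of_norm_le {f : E → F} {c : E} {R M : ℝ} (hR : 0 < R)
    (hM : ∀ w ∈ ball c R, ‖f w‖ ≤ M) : MapsTo f (ball c R) (closedBall (f c) (2 * M)) :=
  fun w hw ↦ by
    rw [mem_closedBall, dist_eq_norm]
    linarith [norm_sub_le (f w) (f c), hM w hw, hM c (mem_ball_self hR)]

variable [NormedSpace ℂ E] [NormedSpace ℂ F]

theorem lipschitzOnWith_closedBall_of_norm_le {f : E → F} {c : E} {r M : ℝ} (hr : 0 < r)
    (hd : DifferentiableOn ℂ f (ball c (4 * r))) (hM : ∀ w ∈ ball c (4 * r), ‖f w‖ ≤ M) :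
    LipschitzOnWith (Real.toNNReal (2 * M / (3 * r))) f (closedBall c r) := by
  refine LipschitzOnWith.of_dist_le' fun y hy x hx ↦ ?_
  rw [mem_closedBall] at hx hy
  have hsub : ball x (3 * r) ⊆ ball c (4 * r) := ball_subset_ball' (by linarith)
  exact Complex.dist_le_div_mul_dist_of_mapsTo_ball (hd.mono hsub)
    (mapsTo_closedBall_of_norm_le (by positivity) fun w hw ↦ hM w (hsub hw))
    (mem_ball.2 (by linarith [dist_triangle_right y x c]))

theorem norm_fderiv_le_of_norm_le {f : E → F} {c : E} {R M : ℝ} (hR : 0 < R)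
    (hd : DifferentiableOn ℂ f (ball c R)) (hM : ∀ w ∈ ball c R, ‖f w‖ ≤ M) :
    ‖fderiv ℂ f c‖ ≤ 2 * M / R :=
  Complex.norm_fderiv_le_div_of_mapsTo_ball hd (mapsTo_closedBall_of_norm_le hR hM) hR

theorem exists_tendstoUniformlyOn_fderiv [CompleteSpace F] {f : ι → E → F} {g : E → F}
    {l : Filter ι} [l.NeBot] {c : E} {r : ℝ} (hr : 0 < r)
    (hd : ∀ i, DifferentiableOn ℂ (f i) (ball c (2 * r)))
    (hu : TendstoUniformlyOn f g l (ball c (2 * r))) :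
    ∃ g' : E → E →L[ℂ] F, TendstoUniformlyOn (fun i ↦ fderiv ℂ (f i)) g' l (ball c r) := by
  have hcauchy : UniformCauchySeqOn (fun i ↦ fderiv ℂ (f i)) l (ball c r) := by
    intro u hu'
    obtain ⟨ε, hε, hεu⟩ := Metric.mem_uniformity_dist.1 hu'
    filter_upwards [hu.uniformCauchySeqOn _ (dist_mem_uniformity (ε := ε * r / 4) (by positivity))]
      with p hp x hx
    have hsub : ball x r ⊆ ball c (2 * r) := ball_subset_ball' (by rw [mem_ball] at hx; linarith)
    have hdiff : ∀ i, DifferentiableAt ℂ (f i) x := fun i ↦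
      (hd i).differentiableAt (isOpen_ball.mem_nhds (hsub (mem_ball_self hr)))
    refine hεu ?_
    have hest := norm_fderiv_le_of_norm_le (M := ε * r / 4) hr (((hd p.1).sub (hd p.2)).mono hsub)
      fun w hw ↦ by simpa [dist_eq_norm] using (hp w (hsub hw)).le
    rw [fderiv_sub (hdiff p.1) (hdiff p.2)] at hest
    rw [dist_eq_norm]
    calc _ ≤ 2 * (ε * r / 4) / r := hest
      _ < ε := by field_simp; linarith
  exact ⟨fun x ↦ limUnder l fun i ↦ fderiv ℂ (f i) x, hcauchy.tendstoUniformlyOn_of_tendsto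
    fun x hx ↦ tendsto_nhds_limUnder (CompleteSpace.complete (hcauchy.cauchy_map hx))⟩

theorem differentiableOn_of_tendsto_of_norm_le [ProperSpace E] [CompleteSpace F]
    {f : ι → E → F} {g : E → F} {l : Filter ι} [l.NeBot] {Ω : Set E} {M : ℝ} (hΩ : IsOpen Ω)
    (hd : ∀ i, DifferentiableOn ℂ (f i) Ω) (hM : ∀ i, ∀ x ∈ Ω, ‖f i x‖ ≤ M)
    (hg : ∀ x ∈ Ω, Tendsto (fun i ↦ f i x) l (𝓝 (g x))) : DifferentiableOn ℂ g Ω := by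
  intro x₀ hx₀
  obtain ⟨ε, hε, hball⟩ := Metric.isOpen_iff.1 hΩ x₀ hx₀
  have hr : 0 < ε / 8 := by positivity
  have h8 : ball x₀ (4 * (2 * (ε / 8))) ⊆ Ω := by rwa [show 4 * (2 * (ε / 8)) = ε by ring]
  have hcb : closedBall x₀ (2 * (ε / 8)) ⊆ Ω :=
    (closedBall_subset_ball (by linarith)).trans h8
  have hunif : TendstoUniformlyOn f g l (ball x₀ (2 * (ε / 8))) :=
    (tendstoUniformlyOn_of_lipschitzOnWith (isCompact_closedBall _ _)
      (fun i ↦ lipschitzOnWith_closedBall_of_norm_le (by positivity) ((hd i).mono h8)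
        fun w hw ↦ hM i w (h8 hw))
      fun x hx ↦ hg x (hcb hx)).mono ball_subset_closedBall
  have hsub : ball x₀ (2 * (ε / 8)) ⊆ Ω := ball_subset_closedBall.trans hcb
  obtain ⟨g', hg'⟩ := exists_tendstoUniformlyOn_fderiv hr (fun i ↦ (hd i).mono hsub) hunif
  have hsub' : ball x₀ (ε / 8) ⊆ Ω := (ball_subset_ball (by linarith)).trans hsub
  exact (hasFDerivAt_of_tendstoUniformlyOn isOpen_ball hg'
    (fun i x hx ↦ ((hd i).differentiableAt (hΩ.mem_nhds (hsub' hx))).hasFDerivAt)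
    (fun x hx ↦ hg x (hsub' hx)) (mem_ball_self hr)).differentiableAt.differentiableWithinAt

end Vitali

-- A weak form of Montel's theorem: the ultrafilter replaces the diagonal subsequence.
theorem exists_differentiableOn_tendsto_ultrafilter {ι E F : Type*} [NormedAddCommGroup E]
    [NormedSpace ℂ E] [ProperSpace E] [NormedAddCommGroup F] [NormedSpace ℂ F] [ProperSpace F]
    {f : ι → E → F} {Ω : Set E} {M : ℝ} (hΩ : IsOpen Ω) (hd : ∀ i, DifferentiableOn ℂ (f i) Ω)
    (hM : ∀ i, ∀ x ∈ Ω, ‖f i x‖ ≤ M) (U : Ultrafilter ι) :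
    ∃ g : E → F, DifferentiableOn ℂ g Ω ∧ (∀ x ∈ Ω, ‖g x‖ ≤ M) ∧
      ∀ x ∈ Ω, Tendsto (fun i ↦ f i x) U (𝓝 (g x)) := by
  have hlim : ∀ x ∈ Ω, Tendsto (fun i ↦ f i x) U (𝓝 (limUnder U fun i ↦ f i x)) := by
    intro x hx
    obtain ⟨y, -, hy⟩ := (isCompact_closedBall (0 : F) M).ultrafilter_le_nhds
      (U.map fun i ↦ f i x) (by
        rw [Ultrafilter.coe_map, le_principal_iff, Filter.mem_map]
        exact univ_mem' fun i ↦ mem_closedBall_zero_iff.2 (hM i x hx))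
    exact tendsto_nhds_limUnder ⟨y, hy⟩
  refine ⟨fun x ↦ limUnder U fun i ↦ f i x,
    differentiableOn_of_tendsto_of_norm_le hΩ hd hM hlim, fun x hx ↦ ?_, hlim⟩
  exact le_of_tendsto (hlim x hx).norm (Eventually.of_forall fun i ↦ hM i x hx)

theorem exists_eq_mul_of_tendsto {ι κ : Type*} {l : Filter ι} [l.NeBot] {w : κ → ℂ}
    {v : ι → κ → ℂ} {b : κ → ℂ} (hv : ∀ ν, ∃ c : ℂ, ∀ k, v ν k = c * w k)
    (hb : Tendsto v l (𝓝 b)) : ∃ c : ℂ, ∀ k, b k = c * w k := by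
  obtain ⟨c, hc⟩ := Submodule.mem_span_singleton.1 <|
    (Submodule.span ℂ {w}).closed_of_finiteDimensional.mem_of_tendsto hb
      (Eventually.of_forall fun ν ↦ by
        obtain ⟨c, hc⟩ := hv ν
        exact Submodule.mem_span_singleton.2 ⟨c, funext fun k ↦ by simp [hc]⟩)
  exact ⟨c, fun k ↦ by simpa using (congrFun hc k).symm⟩

section Pick

variable {m n : ℕ} {Ω : Set (Fin m → ℂ)} {z : Fin n → Fin m → ℂ} {w : Fin n → ℂ} {i j : Fin n}

def dInvSet (m n : ℕ) (Ω : Set (Fin m → ℂ)) (z : Fin n → (Fin m → ℂ))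
    (α : Fin n → ℂ) (i j : Fin n) : Set ℝ :=
  {r : ℝ | ∃ f : (Fin m → ℂ) → ℂ, DifferentiableOn ℂ f Ω ∧
    MapsTo f Ω (ball (0:ℂ) 1) ∧ (∃ c : ℂ, ∀ k, f (z k) = c * α k) ∧
    r = pdist (f (z i)) (f (z j))}

theorem dInvSet_nonempty : (dInvSet m n Ω z w i j).Nonempty :=
  ⟨_, fun _ ↦ 0, differentiableOn_const 0, fun _ _ ↦ mem_ball_self one_pos, ⟨0, by simp⟩, rfl⟩

theorem bddAbove_dInvSet (hz : ∀ k, z k ∈ Ω) : BddAbove (dInvSet m n Ω z w i j) := by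
  refine ⟨1, ?_⟩
  rintro _ ⟨f, -, hfm, -, rfl⟩
  exact pdist_le_one (mem_ball_zero_iff.1 (hfm (hz i))) (mem_ball_zero_iff.1 (hfm (hz j)))

theorem pdist_le_dInv (hz : ∀ k, z k ∈ Ω) {f : (Fin m → ℂ) → ℂ} (hfd : DifferentiableOn ℂ f Ω)
    (hfm : MapsTo f Ω (ball 0 1)) (hfw : ∀ k, f (z k) = w k) :
    pdist (w i) (w j) ≤ dInv m n Ω z w i j :=
  le_csSup (bddAbove_dInvSet hz) ⟨f, hfd, hfm, ⟨1, by simpa using hfw⟩, by rw [hfw, hfw]⟩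

theorem exists_dInv_extremal (hΩo : IsOpen Ω) (hΩc : IsPreconnected Ω) (hz : ∀ k, z k ∈ Ω)
    (hij : w i ≠ w j) :
    ∃ g : (Fin m → ℂ) → ℂ, ∃ c : ℂ, DifferentiableOn ℂ g Ω ∧ MapsTo g Ω (ball 0 1) ∧
      (∀ k, g (z k) = c * w k) ∧ pdist (g (z i)) (g (z j)) = dInv m n Ω z w i j := by
  obtain ⟨u, -, hu, hmem⟩ :=
    exists_seq_tendsto_sSup (S := dInvSet m n Ω z w i j) dInvSet_nonempty (bddAbove_dInvSet hz)
  choose F hFd hFm hFc hFu using hmem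
  choose C hC using hFc
  let U := Ultrafilter.of (atTop : Filter ℕ)
  obtain ⟨g, hgd, hgle, hgt⟩ := exists_differentiableOn_tendsto_ultrafilter hΩo hFd
    (fun ν x hx ↦ (mem_ball_zero_iff.1 (hFm ν hx)).le) U
  obtain ⟨c, hgc⟩ := exists_eq_mul_of_tendsto (v := fun ν k ↦ F ν (z k)) (fun ν ↦ ⟨C ν, hC ν⟩)
    (tendsto_pi_nhds.2 fun k ↦ hgt _ (hz k))
  have hgm : MapsTo g Ω (ball 0 1) := by
    intro x hx
    rw [mem_ball_zero_iff]
    by_contra! h1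
    have hconst := Complex.eqOn_of_isPreconnected_of_isMaxOn_norm hΩc hΩo hgd hx
      fun y hy ↦ (hgle y hy).trans h1
    have hc0 : c = 0 := by
      have := (hconst (hz i)).trans (hconst (hz j)).symm
      rw [hgc, hgc] at this
      exact (mul_eq_mul_left_iff.1 this).resolve_left hij
    have hgx : g x = g (z i) := (hconst (hz i)).symm
    rw [hgx, hgc, hc0, zero_mul, norm_zero] at h1
    exact zero_lt_one.not_ge h1
  refine ⟨g, c, hgd, hgm, hgc, tendsto_nhds_unique ?_ (hu.mono_left (Ultrafilter.of_le _))⟩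
  have hpair := (continuousAt_pdist (conj_mul_ne_one (mem_ball_zero_iff.1 (hgm (hz i)))
    (mem_ball_zero_iff.1 (hgm (hz j))).le)).tendsto.comp
    ((hgt _ (hz i)).prodMk_nhds (hgt _ (hz j)))
  exact hpair.congr fun ν ↦ (hFu ν).symm

theorem exists_interpolant_of_pdist_le_dInv (hΩo : IsOpen Ω) (hΩc : IsPreconnected Ω)
    (hz : ∀ k, z k ∈ Ω) (hw : ∀ k, ‖w k‖ < 1) (hij : w i ≠ w j)
    (hle : pdist (w i) (w j) ≤ dInv m n Ω z w i j) :
    ∃ f : (Fin m → ℂ) → ℂ, DifferentiableOn ℂ f Ω ∧ MapsTo f Ω (ball 0 1) ∧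
      ∀ k, f (z k) = w k := by
  obtain ⟨g, c, hgd, hgm, hgc, hgi⟩ := exists_dInv_extremal hΩo hΩc hz hij
  have hc : 1 ≤ ‖c‖ := by
    by_contra! hc
    have := pdist_mul_lt_pdist (hw i) (hw j) hij hc
    rw [← hgc i, ← hgc j, hgi] at this
    linarith
  have hc0 : c ≠ 0 := norm_pos_iff.1 (by linarith)
  refine ⟨fun x ↦ c⁻¹ * g x, hgd.const_mul _, fun x hx ↦ ?_,
    fun k ↦ by simp only [hgc k, inv_mul_cancel_left₀ hc0]⟩
  rw [mem_ball_zero_iff, norm_mul, norm_inv]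
  calc ‖c‖⁻¹ * ‖g x‖ ≤ 1 * ‖g x‖ := by gcongr; exact inv_le_one_of_one_le₀ hc
    _ < 1 := by simpa using hgm hx

end Pick

theorem stmt11_general (m n : ℕ) (Ω : Set (Fin m → ℂ)) (hopen : IsOpen Ω) (hconn : IsConnected Ω)
    (z : Fin n → (Fin m → ℂ)) (hz : ∀ j, z j ∈ Ω)
    (w : Fin n → ℂ) (hw : ∀ j, w j ∈ ball (0:ℂ) 1) :
    (∃ f : (Fin m → ℂ) → ℂ, DifferentiableOn ℂ f Ω ∧
        MapsTo f Ω (ball (0:ℂ) 1) ∧ ∀ j, f (z j) = w j) ↔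
      ((∀ i j, w i = w j) ∨
        ∃ i j, w i ≠ w j ∧ pdist (w i) (w j) ≤ dInv m n Ω z w i j) := by
  constructor
  · rintro ⟨f, hfd, hfm, hfw⟩
    by_cases hall : ∀ i j, w i = w j
    · exact Or.inl hall
    obtain ⟨i, j, hij⟩ : ∃ i j, w i ≠ w j := by simpa using hall
    exact Or.inr ⟨i, j, hij, pdist_le_dInv hz hfd hfm hfw⟩
  · rintro (hall | ⟨i, j, hij, hle⟩)
    · rcases isEmpty_or_nonempty (Fin n) with hn | ⟨⟨k₀⟩⟩
      · exact ⟨fun _ ↦ 0, differentiableOn_const 0, fun _ _ ↦ mem_ball_self one_pos, isEmptyElim⟩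
      · exact ⟨fun _ ↦ w k₀, differentiableOn_const _, fun _ _ ↦ hw k₀, hall k₀⟩
    · exact exists_interpolant_of_pdist_le_dInv hopen hconn.isPreconnected hz
        (fun k ↦ mem_ball_zero_iff.1 (hw k)) hij hle

theorem stmt11 (m n : ℕ) (Ω : Set (Fin m → ℂ)) (hopen : IsOpen Ω) (hconn : IsConnected Ω)
    (hCara : ∀ x ∈ Ω, ∀ y ∈ Ω, x ≠ y → ∃ f : (Fin m → ℂ) → ℂ,
      DifferentiableOn ℂ f Ω ∧ (∃ c : ℝ, ∀ x' ∈ Ω, ‖f x'‖ ≤ c) ∧ f x ≠ f y)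
    (z : Fin n → (Fin m → ℂ)) (hz : ∀ j, z j ∈ Ω) (hinj : Function.Injective z)
    (w : Fin n → ℂ) (hw : ∀ j, w j ∈ ball (0:ℂ) 1) :
    (∃ f : (Fin m → ℂ) → ℂ, DifferentiableOn ℂ f Ω ∧
        MapsTo f Ω (ball (0:ℂ) 1) ∧ ∀ j, f (z j) = w j) ↔
      ((∀ i j, w i = w j) ∨
        ∃ i j, w i ≠ w j ∧ pdist (w i) (w j) ≤ dInv m n Ω z w i j) :=
  stmt11_general m n Ω hopen hconn z hz w hw
end
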